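/- Let θ = (θ₁,…,θₙ) ∈ ℝⁿ be such that 1, θ₁, …, θₙ are linearly independent over ℤ. If η ∈ ℝⁿ satisfies inf { ‖m·η‖ : m is a best approximation to θ with respect to the weights j₁,…,jₙ } > 0, then η ∈ Bad_θ(j₁,…,jₙ). -/

import Mathlib

open scoped BigOperators

/-- Distance from a real number to the nearest integer. -/
noncomputable def nearInt (x : ℝ) : ℝ := |x - round x|

/-- The height `M_m = max_i |m_i|^(1/j_i)` of an integer vector. -/
noncomputable def height (n : ℕ) (j : Fin n → ℝ) (m : Fin n → ℤ) : ℝ :=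
  ⨆ i, (|m i| : ℝ) ^ (1 / j i)

/-- `m ∈ ℤⁿ \ {0}` is a best approximation to `θ` with respect to the weights `j`. -/
def IsBestApprox (n : ℕ) (j θ : Fin n → ℝ) (m : Fin n → ℤ) : Prop :=
  m ≠ 0 ∧ ∀ v : Fin n → ℤ, v ≠ 0 → v ≠ m → v ≠ -m →
    height n j v ≤ height n j m →
    nearInt (∑ i, (m i : ℝ) * θ i) < nearInt (∑ i, (v i : ℝ) * θ i)

/-- `1, θ₁, …, θₙ` are linearly independent over `ℤ`. -/
def ZLinIndep (n : ℕ) (θ : Fin n → ℝ) : Prop :=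
  ∀ (a₀ : ℤ) (a : Fin n → ℤ), (a₀ : ℝ) + ∑ i, (a i : ℝ) * θ i = 0 → a₀ = 0 ∧ a = 0

/-- The twisted badly approximable set `Bad_θ(j₁,…,jₙ)`. -/
def BadTheta (n : ℕ) (j θ : Fin n → ℝ) : Set (Fin n → ℝ) :=
  {η | ∃ c > 0, ∀ q : ℕ, 0 < q →
    c ≤ ⨆ i, (q : ℝ) ^ (j i) * nearInt ((q : ℝ) * θ i - η i)}


/-! If `η ∉ Bad_θ`, then for every `ε > 0` some `q ≥ 1` has `q ^ jᵢ ‖q θᵢ - ηᵢ‖ < ε` for all `i`.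
Dirichlet's theorem in the box `|mᵢ| ≤ (qK) ^ jᵢ`, with the minimiser made a best approximation by
the independence of `1, θ₁, …, θₙ`, gives a best approximation `m` with `‖m · θ‖ < 1 / (qK)`.
Writing `m · η = Σ mᵢ (ηᵢ - q θᵢ) + q (m · θ)` yields `‖m · η‖ < n K ε + 1 / K`, which is below any
prescribed `c > 0` once `K ≥ 2 / c` and `ε = c / (2 n K)`. -/

open Finset

lemma nearInt_nonneg (x : ℝ) : 0 ≤ nearInt x := abs_nonneg _

lemma nearInt_le_abs_sub_intCast (x : ℝ) (k : ℤ) : nearInt x ≤ |x - k| := round_le x k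

lemma nearInt_neg (x : ℝ) : nearInt (-x) = nearInt x := by
  have key : ∀ y : ℝ, nearInt (-y) ≤ nearInt y := fun y => by
    simpa [nearInt, abs_sub_comm, neg_add_eq_sub] using nearInt_le_abs_sub_intCast (-y) (-round y)
  exact le_antisymm (key x) (by simpa using key (-x))

lemma nearInt_sub_comm (x y : ℝ) : nearInt (x - y) = nearInt (y - x) := by
  rw [← neg_sub, nearInt_neg]

lemma nearInt_add_le (x y : ℝ) : nearInt (x + y) ≤ nearInt x + nearInt y := by
  refine (nearInt_le_abs_sub_intCast (x + y) (round x + round y)).trans ?_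
  rw [Int.cast_add, add_sub_add_comm]
  exact abs_add_le _ _

lemma nearInt_sum_le {ι : Type*} (s : Finset ι) (f : ι → ℝ) :
    nearInt (∑ i ∈ s, f i) ≤ ∑ i ∈ s, nearInt (f i) := by
  refine (nearInt_le_abs_sub_intCast _ (∑ i ∈ s, round (f i))).trans ?_
  rw [Int.cast_sum, ← sum_sub_distrib]
  exact abs_sum_le_sum_abs _ _

lemma nearInt_intCast_mul_le (k : ℤ) (x : ℝ) : nearInt (k * x) ≤ |(k : ℝ)| * nearInt x := by
  refine (nearInt_le_abs_sub_intCast _ (k * round x)).trans_eq ?_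
  rw [Int.cast_mul, ← mul_sub, abs_mul, nearInt]

lemma nearInt_natCast_mul_le (k : ℕ) (x : ℝ) : nearInt (k * x) ≤ k * nearInt x := by
  simpa using nearInt_intCast_mul_le k x

lemma nearInt_sub_le_abs_fract_sub (x y : ℝ) : nearInt (x - y) ≤ |Int.fract x - Int.fract y| := by
  refine (nearInt_le_abs_sub_intCast _ (⌊x⌋ - ⌊y⌋)).trans_eq ?_
  rw [Int.fract, Int.fract]
  push_cast
  ring_nf

lemma exists_ne_abs_fract_sub_lt {α : Type*} {s : Finset α} {Q : ℕ} (hQ : 0 < Q) (hs : Q < #s)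
    (g : α → ℝ) : ∃ v ∈ s, ∃ w ∈ s, v ≠ w ∧ |Int.fract (g v) - Int.fract (g w)| < 1 / Q := by
  have hQ' : (0 : ℝ) < Q := Nat.cast_pos.2 hQ
  have hnonneg : ∀ v, 0 ≤ Int.fract (g v) * Q := fun v => by positivity
  have hmaps : ∀ v ∈ s, ⌊Int.fract (g v) * Q⌋₊ ∈ range Q := fun v _ => by
    rw [mem_range, Nat.floor_lt (hnonneg v)]
    exact mul_lt_of_lt_one_left hQ' (Int.fract_lt_one _)
  obtain ⟨v, hv, w, hw, hvw, hbucket⟩ :=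
    exists_ne_map_eq_of_card_lt_of_maps_to (by simpa using hs) hmaps
  refine ⟨v, hv, w, hw, hvw, ?_⟩
  have hv₁ := Nat.floor_le (hnonneg v)
  have hv₂ := Nat.lt_floor_add_one (Int.fract (g v) * Q)
  have hw₁ := Nat.floor_le (hnonneg w)
  have hw₂ := Nat.lt_floor_add_one (Int.fract (g w) * Q)
  rw [hbucket] at hv₁ hv₂
  have key : |Int.fract (g v) * Q - Int.fract (g w) * Q| < 1 :=
    abs_sub_lt_iff.2 ⟨by linarith, by linarith⟩
  rw [← sub_mul, abs_mul, abs_of_pos hQ'] at key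
  rwa [lt_div_iff₀ hQ']

/-- Weighted Dirichlet theorem: pigeonhole the fractional parts of `v · θ` for the
`∏ (⌊Q ^ jᵢ⌋ + 1) > ∏ Q ^ jᵢ = Q` vectors `0 ≤ vᵢ ≤ Q ^ jᵢ` into `Q` intervals of length `1 / Q`. -/
theorem exists_ne_zero_abs_le_rpow_nearInt_lt {ι : Type*} [Fintype ι] [DecidableEq ι]
    {j : ι → ℝ} (hsum : ∑ i, j i = 1) (θ : ι → ℝ) {Q : ℕ} (hQ : 0 < Q) :
    ∃ v : ι → ℤ, v ≠ 0 ∧ (∀ i, |(v i : ℝ)| ≤ (Q : ℝ) ^ j i) ∧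
      nearInt (∑ i, (v i : ℝ) * θ i) < 1 / Q := by
  have hQ' : (0 : ℝ) < Q := Nat.cast_pos.2 hQ
  have hne : (univ : Finset ι).Nonempty := by
    by_contra h
    simp [not_nonempty_iff_eq_empty.1 h] at hsum
  set S := Fintype.piFinset fun i => Icc (0 : ℤ) ⌊(Q : ℝ) ^ j i⌋
  have hcard : (Q : ℝ) < #S := calc
    (Q : ℝ) = ∏ i, (Q : ℝ) ^ j i := by rw [← Real.rpow_sum_of_pos hQ', hsum, Real.rpow_one]
    _ < ∏ i, ((⌊(Q : ℝ) ^ j i⌋ : ℝ) + 1) :=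
      prod_lt_prod_of_nonempty (fun i _ => by positivity) (fun i _ => Int.lt_floor_add_one _) hne
    _ = #S := by
      rw [Fintype.card_piFinset, Nat.cast_prod]
      refine prod_congr rfl fun i _ => ?_
      have : (0 : ℤ) ≤ ⌊(Q : ℝ) ^ j i⌋ := Int.floor_nonneg.2 (by positivity)
      have h : ((⌊(Q : ℝ) ^ j i⌋ + 1).toNat : ℤ) = ⌊(Q : ℝ) ^ j i⌋ + 1 :=
        Int.toNat_of_nonneg (by omega)
      rw [Int.card_Icc, sub_zero]
      exact_mod_cast h.symm
  obtain ⟨v, hv, w, hw, hvw, hvw_close⟩ := exists_ne_abs_fract_sub_lt hQ (by exact_mod_cast hcard)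
    fun v : ι → ℤ => ∑ i, (v i : ℝ) * θ i
  refine ⟨v - w, sub_ne_zero.2 hvw, fun i => ?_, ?_⟩
  · have hvi := mem_Icc.1 (Fintype.mem_piFinset.1 hv i)
    have hwi := mem_Icc.1 (Fintype.mem_piFinset.1 hw i)
    have : |v i - w i| ≤ ⌊(Q : ℝ) ^ j i⌋ := abs_sub_le_iff.2 ⟨by omega, by omega⟩
    calc |((v - w) i : ℝ)| = (|v i - w i| : ℤ) := by push_cast [Pi.sub_apply]; rfl
      _ ≤ (⌊(Q : ℝ) ^ j i⌋ : ℝ) := by exact_mod_cast this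
      _ ≤ (Q : ℝ) ^ j i := Int.floor_le _
  · refine lt_of_le_of_lt ?_ hvw_close
    have hdiff : ∑ i, ((v - w) i : ℝ) * θ i = ∑ i, (v i : ℝ) * θ i - ∑ i, (w i : ℝ) * θ i := by
      simp only [Pi.sub_apply, Int.cast_sub, sub_mul, sum_sub_distrib]
    rw [hdiff]
    exact nearInt_sub_le_abs_fract_sub _ _

lemma height_le_iff {n : ℕ} {j : Fin n → ℝ} (hj : ∀ i, 0 < j i) {N : ℝ} (hN : 0 ≤ N)
    (v : Fin n → ℤ) : height n j v ≤ N ↔ ∀ i, |(v i : ℝ)| ≤ N ^ j i := by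
  simp only [height, one_div]
  constructor
  · intro h i
    refine (Real.rpow_inv_le_iff_of_pos (abs_nonneg _) hN (hj i)).1 ?_
    exact (le_ciSup (Set.finite_range _).bddAbove i).trans h
  · intro h
    exact Real.iSup_le (fun i => (Real.rpow_inv_le_iff_of_pos (abs_nonneg _) hN (hj i)).2 (h i)) hN

noncomputable def intBox {ι : Type*} [Fintype ι] [DecidableEq ι] (B : ι → ℝ) : Finset (ι → ℤ) :=
  Fintype.piFinset fun i => Icc (-⌊B i⌋) ⌊B i⌋

lemma mem_intBox {ι : Type*} [Fintype ι] [DecidableEq ι] {B : ι → ℝ} {v : ι → ℤ} :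
    v ∈ intBox B ↔ ∀ i, |(v i : ℝ)| ≤ B i := by
  refine Fintype.mem_piFinset.trans (forall_congr' fun i => ?_)
  rw [mem_Icc, ← abs_le, Int.le_floor, Int.cast_abs]

lemma ZLinIndep.eq_or_eq_neg_of_nearInt_eq {n : ℕ} {θ : Fin n → ℝ} (hθ : ZLinIndep n θ)
    {v w : Fin n → ℤ}
    (h : nearInt (∑ i, (v i : ℝ) * θ i) = nearInt (∑ i, (w i : ℝ) * θ i)) : v = w ∨ v = -w := by
  rcases abs_eq_abs.1 h with h | h
  · left
    refine sub_eq_zero.1 (hθ (round (∑ i, (w i : ℝ) * θ i) - round (∑ i, (v i : ℝ) * θ i)) _ ?_).2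
    simp only [Pi.sub_apply, Int.cast_sub, sub_mul, sum_sub_distrib]
    linarith
  · right
    refine eq_neg_of_add_eq_zero_left
      (hθ (-(round (∑ i, (v i : ℝ) * θ i) + round (∑ i, (w i : ℝ) * θ i))) _ ?_).2
    simp only [Pi.add_apply, Int.cast_add, Int.cast_neg, add_mul, sum_add_distrib]
    linarith

/-- Minimising `‖v · θ‖` over the nonzero vectors of the Dirichlet box gives a best approximation,
since by independence of `1, θ₁, …, θₙ` no other vector `v ≠ ±m` ties with the minimum. -/
theorem exists_isBestApprox_abs_le_rpow_nearInt_lt {n : ℕ} {j θ : Fin n → ℝ}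
    (hj : ∀ i, 0 < j i) (hsum : ∑ i, j i = 1) (hθ : ZLinIndep n θ) {Q : ℕ} (hQ : 0 < Q) :
    ∃ m : Fin n → ℤ, IsBestApprox n j θ m ∧ (∀ i, |(m i : ℝ)| ≤ (Q : ℝ) ^ j i) ∧
      nearInt (∑ i, (m i : ℝ) * θ i) < 1 / Q := by
  set T := (intBox fun i => (Q : ℝ) ^ j i).erase 0
  obtain ⟨v₀, hv₀, hv₀box, hv₀θ⟩ := exists_ne_zero_abs_le_rpow_nearInt_lt hsum θ hQ
  have hv₀T : v₀ ∈ T := mem_erase.2 ⟨hv₀, mem_intBox.2 hv₀box⟩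
  obtain ⟨m, hmT, hmin⟩ := exists_min_image T (fun v => nearInt (∑ i, (v i : ℝ) * θ i)) ⟨v₀, hv₀T⟩
  obtain ⟨hm0, hmbox⟩ := mem_erase.1 hmT
  refine ⟨m, ⟨hm0, fun v hv0 hvm hvm' hv => ?_⟩, mem_intBox.1 hmbox,
    (hmin v₀ hv₀T).trans_lt hv₀θ⟩
  have hvT : v ∈ T := by
    refine mem_erase.2 ⟨hv0, mem_intBox.2 ?_⟩
    refine (height_le_iff hj (Nat.cast_nonneg Q) v).1 (hv.trans ?_)
    exact (height_le_iff hj (Nat.cast_nonneg Q) m).2 (mem_intBox.1 hmbox)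
  refine (hmin v hvT).lt_of_ne fun h => ?_
  rcases hθ.eq_or_eq_neg_of_nearInt_eq h.symm with rfl | rfl
  · exact hvm rfl
  · exact hvm' rfl

lemma nearInt_sum_mul_le {ι : Type*} [Fintype ι] (m : ι → ℤ) (θ η : ι → ℝ) (q : ℕ) :
    nearInt (∑ i, (m i : ℝ) * η i) ≤
      ∑ i, |(m i : ℝ)| * nearInt (q * θ i - η i) + q * nearInt (∑ i, (m i : ℝ) * θ i) := by
  have hsplit : ∑ i, (m i : ℝ) * η i =
      ∑ i, (m i : ℝ) * (η i - q * θ i) + q * ∑ i, (m i : ℝ) * θ i := by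
    rw [mul_sum, ← sum_add_distrib]
    exact sum_congr rfl fun i _ => by ring
  rw [hsplit]
  refine (nearInt_add_le _ _).trans (add_le_add ?_ (nearInt_natCast_mul_le _ _))
  refine (nearInt_sum_le _ _).trans (sum_le_sum fun i _ => ?_)
  rw [nearInt_sub_comm (q * θ i)]
  exact nearInt_intCast_mul_le _ _

lemma sum_abs_mul_le_card_mul_iSup {ι : Type*} [Fintype ι] {j : ι → ℝ} (hj : ∀ i, j i ≤ 1)
    {m : ι → ℤ} {d : ι → ℝ} (hd : ∀ i, 0 ≤ d i) {q K : ℕ} (hK : 0 < K)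
    (hm : ∀ i, |(m i : ℝ)| ≤ ((q * K : ℕ) : ℝ) ^ j i) :
    ∑ i, |(m i : ℝ)| * d i ≤ Fintype.card ι * K * ⨆ i, (q : ℝ) ^ j i * d i := by
  have hK1 : (1 : ℝ) ≤ K := by exact_mod_cast hK
  have hcoord : ∀ i, |(m i : ℝ)| * d i ≤ K * ⨆ i, (q : ℝ) ^ j i * d i := fun i => calc
    |(m i : ℝ)| * d i ≤ ((q * K : ℕ) : ℝ) ^ j i * d i := mul_le_mul_of_nonneg_right (hm i) (hd i)
    _ = (K : ℝ) ^ j i * ((q : ℝ) ^ j i * d i) := by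
      rw [Nat.cast_mul, Real.mul_rpow (Nat.cast_nonneg q) (Nat.cast_nonneg K)]; ring
    _ ≤ K * ⨆ i, (q : ℝ) ^ j i * d i :=
      mul_le_mul (Real.rpow_le_self_of_one_le hK1 (hj i))
        (le_ciSup (f := fun i => (q : ℝ) ^ j i * d i) (Set.finite_range _).bddAbove i)
        (mul_nonneg (by positivity) (hd i)) (Nat.cast_nonneg K)
  calc ∑ i, |(m i : ℝ)| * d i ≤ ∑ _i : ι, K * ⨆ i, (q : ℝ) ^ j i * d i :=
        sum_le_sum fun i _ => hcoord i
    _ = Fintype.card ι * K * ⨆ i, (q : ℝ) ^ j i * d i := by simp [mul_assoc]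

theorem statement11 (n : ℕ) (hn : 1 ≤ n) (θ j : Fin n → ℝ)
    (hj : ∀ i, 0 < j i) (hsum : ∑ i, j i = 1) (hθ : ZLinIndep n θ)
    (η : Fin n → ℝ)
    (hη : ∃ c > 0, ∀ m : Fin n → ℤ, IsBestApprox n j θ m →
      c ≤ nearInt (∑ i, (m i : ℝ) * η i)) :
    η ∈ BadTheta n j θ := by
  obtain ⟨c, hc, hbest⟩ := hη
  obtain ⟨K, hK⟩ := exists_nat_ge (2 / c)
  have hK0 : 0 < K := Nat.cast_pos.1 ((by positivity : (0 : ℝ) < 2 / c).trans_le hK)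
  have hn' : (0 : ℝ) < n := by exact_mod_cast hn
  refine ⟨c / (2 * n * K), by positivity, fun q hq => ?_⟩
  by_contra! hsmall
  obtain ⟨m, hm, hmbox, hmθ⟩ :=
    exists_isBestApprox_abs_le_rpow_nearInt_lt hj hsum hθ (Nat.mul_pos hq hK0)
  have hj1 : ∀ i, j i ≤ 1 := fun i => hsum ▸ single_le_sum (fun i _ => (hj i).le) (mem_univ i)
  have hfirst : ∑ i, |(m i : ℝ)| * nearInt (q * θ i - η i) ≤ c / 2 := calc
    _ ≤ n * K * ⨆ i, (q : ℝ) ^ j i * nearInt (q * θ i - η i) := by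
      simpa using sum_abs_mul_le_card_mul_iSup hj1 (fun i => nearInt_nonneg _) hK0 hmbox
    _ ≤ n * K * (c / (2 * n * K)) := by gcongr
    _ = c / 2 := by field_simp
  have hsecond : q * nearInt (∑ i, (m i : ℝ) * θ i) < c / 2 := calc
    _ < q * (1 / ((q * K : ℕ) : ℝ)) := mul_lt_mul_of_pos_left hmθ (Nat.cast_pos.2 hq)
    _ = 1 / K := by push_cast; field_simp
    _ ≤ c / 2 := by
      rw [div_le_div_iff₀ (Nat.cast_pos.2 hK0) two_pos]
      linarith [(div_le_iff₀ hc).1 hK]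
  linarith [hbest m hm, nearInt_sum_mul_le m θ η q]
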